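/- For unitaries U_1,…,U_N, V_1,…,V_N in U(D), a Hermitian matrix H, and ρ_0 = |φ_0⟩⟨φ_0|, the partial Euclidean gradient ∇_{U_h}g = (U_1⋯U_{h−1})†H U_1⋯U_N ρ_0 (U_{h+1}⋯U_N)† of g(U_1,…,U_N) = trace(H·U_1⋯U_N ρ_0 U_N†⋯U_1†) satisfies ‖∇_{U_h}g(U_1,…,U_N) − ∇_{U_h}g(V_1,…,V_N)‖_F ≤ 2‖H‖ Σ_{b=1}^N ‖U_b − V_b‖_F. -/

import Mathlib

open Matrix BigOperators
open scoped Matrix.Norms.L2Operator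

noncomputable section

/-- Frobenius norm. -/
def frob {D : ℕ} (A : Matrix (Fin D) (Fin D) ℂ) : ℝ :=
  Real.sqrt (∑ i, ∑ j, Complex.normSq (A i j))

/-- Ordered product `U_a ⋯ U_{b-1}` of the layer unitaries (0-based indices). -/
def layerProd {D N : ℕ} (U : Fin N → Matrix (Fin D) (Fin D) ℂ) (a b : ℕ) :
    Matrix (Fin D) (Fin D) ℂ :=
  ((((List.finRange N).drop a).take (b - a)).map U).prod

/-- Partial Euclidean gradient
`∇_{U_h} g = (U_0⋯U_{h−1})† H (U_0⋯U_{N−1}) ρ₀ (U_{h+1}⋯U_{N−1})†`. -/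
def egrad {D N : ℕ} (H ρ : Matrix (Fin D) (Fin D) ℂ)
    (U : Fin N → Matrix (Fin D) (Fin D) ℂ) (h : Fin N) : Matrix (Fin D) (Fin D) ℂ :=
  (layerProd U 0 h)ᴴ * H * layerProd U 0 N * ρ * (layerProd U (h + 1) N)ᴴ

/-! The gradient is `A† H P ρ C†` with `A`, `P`, `C` products of consecutive layers, so the
difference of two gradients splits into three terms, each carrying one factor `A - A'`,
`P - P'` or `C - C'` between operators of norm at most `1` (unitaries and the projection `ρ`)
and one factor `H`. A product of unitaries telescopes,
`U₁⋯Uₙ - V₁⋯Vₙ = Σ_b V₁⋯V_{b-1} (U_b - V_b) U_{b+1}⋯Uₙ`, so its Frobenius distance is at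
most `Σ_b ‖U_b - V_b‖_F`. The layers of `A` and `C` are disjoint and `P` uses each layer once,
giving the factor `2`. -/

theorem norm_le_one_of_mem_unitary {E : Type*} [NormedRing E] [StarRing E] [CStarRing E] {U : E}
    (hU : U ∈ unitary E) : ‖U‖ ≤ 1 := by
  simpa using (CStarRing.norm_mem_unitary_mul 1 hU).trans_le (IsStarProjection.one E).norm_le

theorem Matrix.isStarProjection_vecMulVec {n α : Type*} [Fintype n] [Semiring α] [StarRing α]
    (φ : n → α) (hφ : star φ ⬝ᵥ φ = 1) : IsStarProjection (vecMulVec φ (star φ)) where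
  isIdempotentElem := by
    rw [IsIdempotentElem, vecMulVec_mul_vecMulVec, hφ, one_smul]
  isSelfAdjoint := by
    rw [IsSelfAdjoint, star_eq_conjTranspose, conjTranspose_vecMulVec, star_star]

section Frobenius

variable {D : ℕ}

theorem sum_normSq_eq_norm_toLp_sq {n : Type*} [Fintype n] (x : n → ℂ) :
    ∑ i, Complex.normSq (x i) = ‖WithLp.toLp 2 x‖ ^ 2 := by
  simp [EuclideanSpace.norm_sq_eq, Complex.normSq_eq_norm_sq]

theorem frob_eq_norm_toLp (A : Matrix (Fin D) (Fin D) ℂ) :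
    frob A = ‖WithLp.toLp 2 (Function.uncurry A)‖ := by
  rw [frob, ← Fintype.sum_prod_type', sum_normSq_eq_norm_toLp_sq, Real.sqrt_sq (norm_nonneg _)]
  rfl

theorem frob_nonneg (A : Matrix (Fin D) (Fin D) ℂ) : 0 ≤ frob A := Real.sqrt_nonneg _

theorem frob_add_le (A B : Matrix (Fin D) (Fin D) ℂ) : frob (A + B) ≤ frob A + frob B := by
  simp only [frob_eq_norm_toLp]
  exact norm_add_le (WithLp.toLp 2 (Function.uncurry A)) (WithLp.toLp 2 (Function.uncurry B))

theorem frob_conjTranspose (A : Matrix (Fin D) (Fin D) ℂ) : frob Aᴴ = frob A := by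
  rw [frob, frob, Finset.sum_comm]
  simp [conjTranspose_apply, Complex.normSq_conj]

theorem frob_mul_le (A B : Matrix (Fin D) (Fin D) ℂ) : frob (A * B) ≤ ‖A‖ * frob B := by
  have hcol : ∀ j, ∑ i, Complex.normSq ((A * B) i j) ≤ ‖A‖ ^ 2 * ∑ i, Complex.normSq (B i j) := by
    intro j
    rw [sum_normSq_eq_norm_toLp_sq, sum_normSq_eq_norm_toLp_sq, ← mul_pow]
    gcongr
    exact l2_opNorm_mulVec A (WithLp.toLp 2 fun i => B i j)
  calc frob (A * B) = √(∑ j, ∑ i, Complex.normSq ((A * B) i j)) := by rw [frob, Finset.sum_comm]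
    _ ≤ √(‖A‖ ^ 2 * ∑ j, ∑ i, Complex.normSq (B i j)) := by
        rw [Finset.mul_sum]; exact Real.sqrt_le_sqrt (Finset.sum_le_sum fun j _ => hcol j)
    _ = ‖A‖ * frob B := by
        rw [Real.sqrt_mul (sq_nonneg _), Real.sqrt_sq (norm_nonneg A), frob, Finset.sum_comm]

theorem frob_mul_le' (A B : Matrix (Fin D) (Fin D) ℂ) : frob (A * B) ≤ frob A * ‖B‖ := by
  calc frob (A * B) = frob (Bᴴ * Aᴴ) := by rw [← conjTranspose_mul, frob_conjTranspose]
    _ ≤ ‖Bᴴ‖ * frob Aᴴ := frob_mul_le _ _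
    _ = frob A * ‖B‖ := by rw [l2_opNorm_conjTranspose, frob_conjTranspose, mul_comm]

theorem frob_mul_mul_le (X M Y : Matrix (Fin D) (Fin D) ℂ) :
    frob (X * M * Y) ≤ ‖X‖ * frob M * ‖Y‖ :=
  (frob_mul_le' _ _).trans (mul_le_mul_of_nonneg_right (frob_mul_le _ _) (norm_nonneg _))

theorem norm_list_prod_map_le_one {ι : Type*} {U : ι → Matrix (Fin D) (Fin D) ℂ}
    (hU : ∀ k, U k ∈ unitaryGroup (Fin D) ℂ) (l : List ι) : ‖(l.map U).prod‖ ≤ 1 :=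
  norm_le_one_of_mem_unitary (Submonoid.list_prod_mem _ (by simpa using fun k _ => hU k))

theorem frob_list_prod_sub_le {ι : Type*} {U V : ι → Matrix (Fin D) (Fin D) ℂ}
    (hU : ∀ k, U k ∈ unitaryGroup (Fin D) ℂ) (hV : ∀ k, V k ∈ unitaryGroup (Fin D) ℂ)
    (l : List ι) :
    frob ((l.map U).prod - (l.map V).prod) ≤ (l.map fun k => frob (U k - V k)).sum := by
  induction l with
  | nil => simp [frob]
  | cons a l ih =>
    calc frob (U a * (l.map U).prod - V a * (l.map V).prod)
        = frob ((U a - V a) * (l.map U).prod + V a * ((l.map U).prod - (l.map V).prod)) := by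
          congr 1; noncomm_ring
      _ ≤ frob (U a - V a) * ‖(l.map U).prod‖ + ‖V a‖ * frob ((l.map U).prod - (l.map V).prod) :=
          (frob_add_le _ _).trans (add_le_add (frob_mul_le' _ _) (frob_mul_le _ _))
      _ ≤ frob (U a - V a) * 1 + 1 * (l.map fun k => frob (U k - V k)).sum :=
          add_le_add (mul_le_mul_of_nonneg_left (norm_list_prod_map_le_one hU l) (frob_nonneg _))
            (mul_le_mul (norm_le_one_of_mem_unitary (hV a)) ih (frob_nonneg _) zero_le_one)
      _ = ((a :: l).map fun k => frob (U k - V k)).sum := by simp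

theorem frob_sandwich_sub_le (H ρ A A' P P' C C' : Matrix (Fin D) (Fin D) ℂ)
    (hρ : ‖ρ‖ ≤ 1) (hA' : ‖A'‖ ≤ 1) (hP : ‖P‖ ≤ 1) (hP' : ‖P'‖ ≤ 1) (hC : ‖C‖ ≤ 1) :
    frob (Aᴴ * H * P * ρ * Cᴴ - A'ᴴ * H * P' * ρ * C'ᴴ)
      ≤ ‖H‖ * (frob (A - A') + frob (P - P') + frob (C - C')) := by
  have hCstar : ‖Cᴴ‖ ≤ 1 := (l2_opNorm_conjTranspose C).trans_le hC
  have hA'star : ‖A'ᴴ‖ ≤ 1 := (l2_opNorm_conjTranspose A').trans_le hA'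
  have hsplit : Aᴴ * H * P * ρ * Cᴴ - A'ᴴ * H * P' * ρ * C'ᴴ
      = (A - A')ᴴ * (H * P * ρ * Cᴴ) + A'ᴴ * H * (P - P') * (ρ * Cᴴ)
        + A'ᴴ * H * P' * ρ * (C - C')ᴴ := by
    simp only [conjTranspose_sub]; noncomm_ring
  have h1 : frob ((A - A')ᴴ * (H * P * ρ * Cᴴ)) ≤ ‖H‖ * frob (A - A') := by
    have hrest : ‖H * P * ρ * Cᴴ‖ ≤ ‖H‖ := by
      simpa using norm_mul_le_of_le (norm_mul_le_of_le (norm_mul_le_of_le le_rfl hP) hρ) hCstar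
    calc _ ≤ frob (A - A')ᴴ * ‖H * P * ρ * Cᴴ‖ := frob_mul_le' _ _
      _ ≤ frob (A - A') * ‖H‖ := by rw [frob_conjTranspose]; gcongr; exact frob_nonneg _
      _ = ‖H‖ * frob (A - A') := mul_comm _ _
  have h2 : frob (A'ᴴ * H * (P - P') * (ρ * Cᴴ)) ≤ ‖H‖ * frob (P - P') := by
    calc _ ≤ ‖A'ᴴ * H‖ * frob (P - P') * ‖ρ * Cᴴ‖ := frob_mul_mul_le _ _ _
      _ ≤ (1 * ‖H‖) * frob (P - P') * (1 * 1) :=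
          mul_le_mul (mul_le_mul_of_nonneg_right (norm_mul_le_of_le hA'star le_rfl) (frob_nonneg _))
            (norm_mul_le_of_le hρ hCstar) (norm_nonneg _)
            (mul_nonneg (mul_nonneg zero_le_one (norm_nonneg H)) (frob_nonneg _))
      _ = ‖H‖ * frob (P - P') := by ring
  have h3 : frob (A'ᴴ * H * P' * ρ * (C - C')ᴴ) ≤ ‖H‖ * frob (C - C') := by
    have hrest : ‖A'ᴴ * H * P' * ρ‖ ≤ ‖H‖ := by
      simpa using norm_mul_le_of_le (norm_mul_le_of_le (norm_mul_le_of_le hA'star le_rfl) hP') hρ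
    calc _ ≤ ‖A'ᴴ * H * P' * ρ‖ * frob (C - C')ᴴ := frob_mul_le _ _
      _ ≤ ‖H‖ * frob (C - C') := by rw [frob_conjTranspose]; gcongr; exact frob_nonneg _
  calc _ ≤ frob ((A - A')ᴴ * (H * P * ρ * Cᴴ)) + frob (A'ᴴ * H * (P - P') * (ρ * Cᴴ))
          + frob (A'ᴴ * H * P' * ρ * (C - C')ᴴ) := by
        rw [hsplit]; exact (frob_add_le _ _).trans (add_le_add (frob_add_le _ _) le_rfl)
    _ ≤ ‖H‖ * frob (A - A') + ‖H‖ * frob (P - P') + ‖H‖ * frob (C - C') := by gcongr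
    _ = ‖H‖ * (frob (A - A') + frob (P - P') + frob (C - C')) := by ring

end Frobenius

section Layers

variable {N : ℕ}

def layers (N a b : ℕ) : List (Fin N) := ((List.finRange N).drop a).take (b - a)

theorem layers_sublist (N a b : ℕ) : (layers N a b).Sublist (List.finRange N) :=
  (List.take_sublist _ _).trans (List.drop_sublist _ _)

theorem layers_zero_append_layers_succ_sublist (N h : ℕ) :
    (layers N 0 h ++ layers N (h + 1) N).Sublist (List.finRange N) := by
  have hright : layers N (h + 1) N = (List.finRange N).drop (h + 1) :=
    List.take_of_length_le (by simp)
  rw [hright, layers, List.drop_zero, Nat.sub_zero]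
  conv_rhs => rw [← List.take_append_drop (h + 1) (List.finRange N)]
  exact (List.take_sublist_take_left (Nat.le_succ h)).append (List.Sublist.refl _)

theorem sum_map_le_sum_of_sublist {l : List (Fin N)} (hl : l.Sublist (List.finRange N))
    {f : Fin N → ℝ} (hf : ∀ k, 0 ≤ f k) : (l.map f).sum ≤ ∑ k, f k := by
  rw [Fin.sum_univ_def]
  exact (hl.map f).sum_le_sum (by simp [hf])

variable {D : ℕ} {U V : Fin N → Matrix (Fin D) (Fin D) ℂ}

theorem norm_layerProd_le_one (hU : ∀ k, U k ∈ unitaryGroup (Fin D) ℂ) (a b : ℕ) :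
    ‖layerProd U a b‖ ≤ 1 :=
  norm_list_prod_map_le_one hU _

theorem frob_layerProd_sub_le (hU : ∀ k, U k ∈ unitaryGroup (Fin D) ℂ)
    (hV : ∀ k, V k ∈ unitaryGroup (Fin D) ℂ) (a b : ℕ) :
    frob (layerProd U a b - layerProd V a b)
      ≤ ((layers N a b).map fun k => frob (U k - V k)).sum :=
  frob_list_prod_sub_le hU hV _

end Layers

theorem multilayer_grad_lipschitz_general (D N : ℕ)
    (H : Matrix (Fin D) (Fin D) ℂ)
    (φ0 : Fin D → ℂ) (hφ0 : star φ0 ⬝ᵥ φ0 = 1)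
    (U V : Fin N → Matrix (Fin D) (Fin D) ℂ)
    (hU : ∀ b, U b ∈ Matrix.unitaryGroup (Fin D) ℂ)
    (hV : ∀ b, V b ∈ Matrix.unitaryGroup (Fin D) ℂ)
    (h : Fin N) :
    frob (egrad H (vecMulVec φ0 (star φ0)) U h - egrad H (vecMulVec φ0 (star φ0)) V h)
      ≤ 2 * ‖H‖ * ∑ b, frob (U b - V b) := by
  set d : Fin N → ℝ := fun k => frob (U k - V k)
  have hd : ∀ k, 0 ≤ d k := fun k => frob_nonneg _
  have houter : ((layers N 0 h).map d).sum + ((layers N (h + 1) N).map d).sum ≤ ∑ k, d k := by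
    simpa using sum_map_le_sum_of_sublist (layers_zero_append_layers_succ_sublist N h) hd
  have hfull := sum_map_le_sum_of_sublist (layers_sublist N 0 N) hd
  calc _ ≤ ‖H‖ * (frob (layerProd U 0 h - layerProd V 0 h)
          + frob (layerProd U 0 N - layerProd V 0 N)
          + frob (layerProd U (h + 1) N - layerProd V (h + 1) N)) :=
        frob_sandwich_sub_le _ _ _ _ _ _ _ _ (isStarProjection_vecMulVec φ0 hφ0).norm_le
          (norm_layerProd_le_one hV _ _) (norm_layerProd_le_one hU _ _)
          (norm_layerProd_le_one hV _ _) (norm_layerProd_le_one hU _ _)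
    _ ≤ ‖H‖ * (∑ k, d k + ∑ k, d k) := by
        refine mul_le_mul_of_nonneg_left ?_ (norm_nonneg H)
        linarith [frob_layerProd_sub_le hU hV 0 h, frob_layerProd_sub_le hU hV 0 N,
          frob_layerProd_sub_le hU hV (h + 1) N]
    _ = 2 * ‖H‖ * ∑ k, d k := by ring

/-- Lipschitz bound for the partial Euclidean gradient of the
product-unitary objective:
`‖∇_{U_h}g(U) − ∇_{U_h}g(V)‖_F ≤ 2‖H‖ Σ_b ‖U_b − V_b‖_F`. -/
theorem multilayer_grad_lipschitz (D N : ℕ)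
    (H : Matrix (Fin D) (Fin D) ℂ) (hH : H.IsHermitian)
    (φ0 : Fin D → ℂ) (hφ0 : star φ0 ⬝ᵥ φ0 = 1)
    (U V : Fin N → Matrix (Fin D) (Fin D) ℂ)
    (hU : ∀ b, U b ∈ Matrix.unitaryGroup (Fin D) ℂ)
    (hV : ∀ b, V b ∈ Matrix.unitaryGroup (Fin D) ℂ)
    (h : Fin N) :
    frob (egrad H (vecMulVec φ0 (star φ0)) U h - egrad H (vecMulVec φ0 (star φ0)) V h)
      ≤ 2 * ‖H‖ * ∑ b, frob (U b - V b) :=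
  multilayer_grad_lipschitz_general D N H φ0 hφ0 U V hU hV h
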